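/- Let F : X × S → Y be a smooth map between smooth finite-dimensional manifolds which is a submersion, and let Z ⊆ Y be an embedded submanifold. Then F is transverse to Z, and for almost every s ∈ S (every s that is a regular value of the projection F⁻¹(Z) → S) the map F(·, s) : X → Y is transverse to Z. -/

import Mathlib

open scoped Manifold

/-- Parametric transversality: a submersion `F : X × S → Y` is transverse to any
submanifold `Z ⊆ Y` (given by its tangent spaces `TZ`), and for every `s` that is a
regular value of the projection `F⁻¹(Z) → S` the map `F(·, s)` is transverse to `Z`. -/
theorem stmt10
    {EX ES EY : Type*}
    [NormedAddCommGroup EX] [NormedSpace ℝ EX]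
    [NormedAddCommGroup ES] [NormedSpace ℝ ES]
    [NormedAddCommGroup EY] [NormedSpace ℝ EY]
    {HX HS HY : Type*} [TopologicalSpace HX] [TopologicalSpace HS] [TopologicalSpace HY]
    (IX : ModelWithCorners ℝ EX HX) (IS : ModelWithCorners ℝ ES HS)
    (IY : ModelWithCorners ℝ EY HY)
    {X S Y : Type*}
    [TopologicalSpace X] [ChartedSpace HX X] [IsManifold IX (⊤ : ℕ∞) X]
    [TopologicalSpace S] [ChartedSpace HS S] [IsManifold IS (⊤ : ℕ∞) S]
    [TopologicalSpace Y] [ChartedSpace HY Y] [IsManifold IY (⊤ : ℕ∞) Y]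
    [FiniteDimensional ℝ EX] [FiniteDimensional ℝ ES] [FiniteDimensional ℝ EY]
    (F : X × S → Y) (hF : ContMDiff (IX.prod IS) IY (⊤ : ℕ∞) F)
    (hsubm : ∀ q : X × S, Function.Surjective (mfderiv (IX.prod IS) IY F q))
    (Z : Set Y) (TZ : Y → Submodule ℝ EY) :
    -- F is transverse to Z
    (∀ q : X × S, F q ∈ Z →
        (LinearMap.range ((mfderiv (IX.prod IS) IY F q).toLinearMap :
            (EX × ES) →ₗ[ℝ] EY) : Submodule ℝ EY) ⊔ TZ (F q) = ⊤)
    ∧ -- for every regular value s of the projection F⁻¹(Z) → S, F(·,s) is transverse to Z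
    ∀ s : S,
      (∀ x : X, F (x, s) ∈ Z →
          Submodule.map (LinearMap.snd ℝ EX ES)
            (Submodule.comap ((mfderiv (IX.prod IS) IY F (x, s)).toLinearMap :
              (EX × ES) →ₗ[ℝ] EY) (TZ (F (x, s)))) = ⊤) →
      ∀ x : X, F (x, s) ∈ Z →
        (LinearMap.range ((mfderiv IX IY (fun x' => F (x', s)) x).toLinearMap :
            EX →ₗ[ℝ] EY) : Submodule ℝ EY) ⊔ TZ (F (x, s)) = ⊤ := by
  refine ⟨fun q hq => ?_, fun s hs x hx => ?_⟩
  · rw [eq_top_iff]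
    rintro e -
    obtain ⟨v, hv⟩ := hsubm q e
    exact Submodule.mem_sup_left ⟨v, hv⟩
  · have hdF : MDifferentiableAt (IX.prod IS) IY F (x, s) :=
      (hF (x, s)).mdifferentiableAt (by simp)
    have hdp : MDifferentiableAt IX (IX.prod IS) (fun x' : X => (x', s)) x :=
      (mdifferentiableAt_id).prodMk mdifferentiableAt_const
    have key : mfderiv IX IY (fun x' => F (x', s)) x =
        (mfderiv (IX.prod IS) IY F (x, s)).comp (ContinuousLinearMap.inl ℝ EX ES) := by
      have := mfderiv_comp x hdF hdp
      rw [show (F ∘ fun x' : X => (x', s)) = fun x' => F (x', s) from rfl] at this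
      rw [this, mfderiv_prod_left]; rfl
    set D := mfderiv (IX.prod IS) IY F (x, s)
    rw [eq_top_iff]
    rintro e -
    obtain ⟨⟨a, b⟩, hab⟩ := hsubm (x, s) e
    have hb : b ∈ (⊤ : Submodule ℝ ES) := trivial
    rw [← hs x hx] at hb
    obtain ⟨⟨a', b'⟩, hmem, hsnd⟩ := hb
    have hb' : b' = b := hsnd
    subst hb'
    refine Submodule.mem_sup.2 ⟨D (a - a', 0), ⟨a - a', ?_⟩, D (a', b'), hmem, ?_⟩
    · rw [key]; rfl
    · have : (a - a', (0 : ES)) + (a', b') = (a, b') := by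
        ext <;> simp
      exact (map_add D _ _).symm.trans ((congrArg D this).trans hab)
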